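/- arXiv:2411.18970 — 8 statements merged into one kernel-verified Lean document; each statement's English description precedes it below -/
import Mathlib

section
/- Let E be a real inner product space and let C ⊆ E be a nonempty set. Then the function x ↦ (1/2)‖x‖² − (1/2)(Metric.infDist x C)² is convex on E. (This semiconvexity of the squared distance underlies the gradient formula for the squared distance to a fixed-point set.) -/
/-!
Expanding `‖x - u‖²` shows that `½‖x‖² - ½ dist x u ²` is the affine function
`x ↦ ⟪u, x⟫ - ½‖u‖²`, and `½‖x‖² - ½ (infDist x C)²` is the supremum of these affine functions
over `u ∈ C`. A pointwise supremum of convex functions is convex.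
-/

open Metric

theorem ConvexOn.of_isLUB_image {𝕜 E β ι : Type*} [Semiring 𝕜] [PartialOrder 𝕜]
    [AddCommMonoid E] [AddCommMonoid β] [PartialOrder β] [IsOrderedAddMonoid β]
    [SMul 𝕜 E] [Module 𝕜 β] [PosSMulMono 𝕜 β] {s : Set E} {t : Set ι}
    {f : E → β} {g : ι → E → β} (hs : Convex 𝕜 s) (hg : ∀ i ∈ t, ConvexOn 𝕜 s (g i))
    (hf : ∀ x ∈ s, IsLUB ((g · x) '' t) (f x)) : ConvexOn 𝕜 s f := by
  refine ⟨hs, fun x hx y hy a b ha hb hab => (hf _ (hs hx hy ha hb hab)).2 ?_⟩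
  rintro _ ⟨i, hi, rfl⟩
  calc g i (a • x + b • y) ≤ a • g i x + b • g i y := (hg i hi).2 hx hy ha hb hab
    _ ≤ a • f x + b • f y := by
      gcongr
      · exact (hf x hx).1 ⟨i, hi, rfl⟩
      · exact (hf y hy).1 ⟨i, hi, rfl⟩

theorem Metric.exists_dist_sq_lt_of_infDist_sq_lt {α : Type*} [PseudoMetricSpace α] {x : α}
    {C : Set α} {c : ℝ} (hC : C.Nonempty) (h : infDist x C ^ 2 < c) :
    ∃ u ∈ C, dist x u ^ 2 < c := by
  obtain ⟨u, hu, hxu⟩ := (infDist_lt_iff hC).1 ((Real.lt_sqrt infDist_nonneg).2 h)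
  exact ⟨u, hu, (Real.lt_sqrt dist_nonneg).1 hxu⟩

section InnerProductSpace

variable {E : Type*} [NormedAddCommGroup E] [InnerProductSpace ℝ E]

theorem inner_sub_half_norm_sq_eq (x u : E) :
    inner ℝ u x - 1 / 2 * ‖u‖ ^ 2 = 1 / 2 * ‖x‖ ^ 2 - 1 / 2 * dist x u ^ 2 := by
  rw [dist_eq_norm, norm_sub_sq_real, real_inner_comm]
  ring

theorem convexOn_inner_sub_half_norm_sq (u : E) :
    ConvexOn ℝ Set.univ fun x : E => inner ℝ u x - 1 / 2 * ‖u‖ ^ 2 :=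
  ((innerₛₗ ℝ u).convexOn convex_univ).sub (concaveOn_const _ convex_univ)

theorem isLUB_image_inner_sub_half_norm_sq {C : Set E} (hC : C.Nonempty) (x : E) :
    IsLUB ((fun u => inner ℝ u x - 1 / 2 * ‖u‖ ^ 2) '' C)
      (1 / 2 * ‖x‖ ^ 2 - 1 / 2 * infDist x C ^ 2) := by
  simp only [inner_sub_half_norm_sq_eq]
  refine ⟨?_, fun b hb => ?_⟩
  · rintro _ ⟨u, hu, rfl⟩
    have := pow_le_pow_left₀ infDist_nonneg (infDist_le_dist_of_mem hu (x := x)) 2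
    linarith
  · by_contra! hlt
    obtain ⟨u, hu, hxu⟩ :=
      exists_dist_sq_lt_of_infDist_sq_lt (c := ‖x‖ ^ 2 - 2 * b) hC (by linarith)
    linarith [hb ⟨u, hu, rfl⟩]

end InnerProductSpace

/-- Semiconvexity of the squared distance: for any nonempty set `C` in a real inner
product space `E`, the function `x ↦ (1/2)‖x‖² − (1/2)(infDist x C)²` is convex. -/
theorem fire_semiconvex_sq_dist
    {E : Type*} [NormedAddCommGroup E] [InnerProductSpace ℝ E]
    (C : Set E) (hC : C.Nonempty) :
    ConvexOn ℝ Set.univ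
      (fun x : E => (1 / 2 : ℝ) * ‖x‖ ^ 2 - (1 / 2 : ℝ) * (Metric.infDist x C) ^ 2) :=
  .of_isLUB_image convex_univ (fun u _ => convexOn_inner_sub_half_norm_sq u)
    fun x _ => isLUB_image_inner_sub_half_norm_sq hC x
end

section
/- Let E be a real Hilbert space, f : E → ℝ convex and continuous, λ > 0, and x ∈ E. Then the function z ↦ λ f(z) + (1/2)‖z − x‖² has a unique minimizer over E (existence and uniqueness of the proximal point prox_{λf}(x)). -/
/-!
The objective `z ↦ λ f z + ‖z - x‖² / 2` is `1`-strongly convex. Strong convexity at midpoints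
(the parallelogram law) forces any two points whose values are within `ε` of the infimum to be
within `O(√ε)` of each other, so a minimizing sequence is Cauchy; by completeness it converges, by
lower semicontinuity its limit is a minimizer, and strict convexity makes the minimizer unique.
The infimum is finite because a convex function bounded above near `x` decreases at most linearly,
`f z ≥ f x - C ‖z - x‖`, which the quadratic term dominates.
-/

open Set Filter Topology Metric

section NormedSpace

variable {E : Type*} [NormedAddCommGroup E] [NormedSpace ℝ E] {f g : E → ℝ} {m d : ℝ}

lemma ConvexOn.sub_div_mul_norm_sub_le (hf : ConvexOn ℝ univ f) {x : E} {δ M : ℝ} (hδ : 0 < δ)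
    (hM : ∀ y ∈ closedBall x δ, f y ≤ M) (z : E) :
    f x - (M - f x) / δ * ‖z - x‖ ≤ f z := by
  rcases eq_or_ne z x with rfl | hzx
  · simp
  set r := ‖z - x‖
  have hr : 0 < r := norm_pos_iff.2 (sub_ne_zero.2 hzx)
  -- `y` is the point at distance `δ` from `x` on the far side from `z`, so `x ∈ [y, z]`
  set y := x - (δ / r) • (z - x)
  have hy : y ∈ closedBall x δ := by
    rw [mem_closedBall, dist_eq_norm, sub_sub_cancel_left, norm_neg, norm_smul,
      Real.norm_of_nonneg (by positivity), div_mul_cancel₀ _ hr.ne']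
  have hab : r / (r + δ) + δ / (r + δ) = 1 := by field_simp
  have hx : (r / (r + δ)) • y + (δ / (r + δ)) • z = x := by
    have hb : r / (r + δ) * (δ / r) = δ / (r + δ) := by field_simp
    simp only [y, smul_sub, smul_smul, hb]
    linear_combination (norm := module) hab • x
  have hconv := hf.2 (mem_univ y) (mem_univ z) (by positivity) (by positivity) hab
  rw [hx, smul_eq_mul, smul_eq_mul] at hconv
  rw [div_mul_eq_mul_div, sub_le_comm, le_div_iff₀ hδ]
  rw [div_mul_eq_mul_div, div_mul_eq_mul_div, ← add_div, le_div_iff₀ (by positivity)] at hconv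
  linarith [mul_le_mul_of_nonneg_left (hM y hy) hr.le]

lemma ConvexOn.bddBelow_range_mul_add_half_sq_norm_sub (hf : ConvexOn ℝ univ f) {x : E}
    (hfx : ContinuousAt f x) {lam : ℝ} (hlam : 0 ≤ lam) :
    BddBelow (range fun z => lam * f z + 1 / 2 * ‖z - x‖ ^ 2) := by
  obtain ⟨δ, hδ, hfδ⟩ : ∃ δ > 0, ∀ y ∈ closedBall x δ, f y ≤ f x + 1 :=
    nhds_basis_closedBall.eventually_iff.1 (hfx.eventually (eventually_le_nhds (lt_add_one _)))
  refine ⟨lam * f x - (lam / δ) ^ 2 / 2, forall_mem_range.2 fun z => ?_⟩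
  have h := hf.sub_div_mul_norm_sub_le hδ hfδ z
  rw [add_sub_cancel_left] at h
  have hlam_mul : lam * f x - lam / δ * ‖z - x‖ ≤ lam * f z := by
    simpa only [mul_sub, ← mul_assoc, mul_one_div] using mul_le_mul_of_nonneg_left h hlam
  nlinarith [sq_nonneg (‖z - x‖ - lam / δ)]

lemma StrongConvexOn.mul_sq_norm_sub_le_of_forall_le (hg : StrongConvexOn univ m g)
    (hd : ∀ y, d ≤ g y) (z w : E) :
    m / 4 * ‖z - w‖ ^ 2 ≤ (g z - d) + (g w - d) := by
  obtain ⟨-, hg⟩ := hg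
  have hmid := hg (mem_univ z) (mem_univ w) (a := 1 / 2) (b := 1 / 2) (by norm_num)
    (by norm_num) (by norm_num)
  have := hd ((1 / 2 : ℝ) • z + (1 / 2 : ℝ) • w)
  simp only [smul_eq_mul] at hmid
  linarith

theorem StrongConvexOn.existsUnique_forall_le [CompleteSpace E] (hg : StrongConvexOn univ m g)
    (hm : 0 < m) (hlsc : LowerSemicontinuous g) (hbdd : BddBelow (range g)) :
    ∃! z, ∀ w, g z ≤ g w := by
  have hd : ∀ y, sInf (range g) ≤ g y := fun y => csInf_le hbdd (mem_range_self y)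
  obtain ⟨v, -, hv, hv_mem⟩ := exists_seq_tendsto_sInf (range_nonempty g) hbdd
  choose u hu using hv_mem
  replace hv : Tendsto (g ∘ u) atTop (𝓝 (sInf (range g))) := by
    simpa only [Function.comp_def, hu] using hv
  set d := sInf (range g)
  have hgap : Tendsto (fun n => g (u n) - d) atTop (𝓝 0) := by
    simpa using hv.sub_const d
  have hcauchy : CauchySeq u := by
    rw [cauchySeq_iff_tendsto_dist_atTop_0]
    refine squeeze_zero (fun _ => dist_nonneg) (fun p => ?_)
      (g := fun p : ℕ × ℕ => √(4 / m * ((g (u p.1) - d) + (g (u p.2) - d)))) ?_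
    · have := hd (u p.1)
      have := hd (u p.2)
      rw [Real.le_sqrt dist_nonneg (by positivity), dist_eq_norm, div_mul_eq_mul_div,
        le_div_iff₀ hm]
      linarith [hg.mul_sq_norm_sub_le_of_forall_le hd (u p.1) (u p.2)]
    · rw [← prod_atTop_atTop_eq]
      simpa using (((hgap.comp tendsto_fst).add (hgap.comp tendsto_snd)).const_mul (4 / m)).sqrt
  obtain ⟨z, hz⟩ := cauchySeq_tendsto_of_complete hcauchy
  have hgz : g z ≤ d := le_of_forall_lt_imp_le_of_dense fun y hy =>
    ge_of_tendsto hv ((hz.eventually (hlsc z y hy)).mono fun _ => le_of_lt)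
  have hmin : ∀ w, g z ≤ g w := fun w => hgz.trans (hd w)
  refine ⟨z, hmin, fun z' hz' => ?_⟩
  exact (hg.strictConvexOn hm).eq_of_isMinOn (isMinOn_univ_iff.2 hz') (isMinOn_univ_iff.2 hmin)
    (mem_univ _) (mem_univ _)

end NormedSpace

lemma ConvexOn.strongConvexOn_mul_add_half_sq_norm_sub {E : Type*} [NormedAddCommGroup E]
    [InnerProductSpace ℝ E] {s : Set E} {f : E → ℝ} {lam : ℝ} (hf : ConvexOn ℝ s f)
    (hlam : 0 ≤ lam) (x : E) :
    StrongConvexOn s 1 fun z => lam * f z + 1 / 2 * ‖z - x‖ ^ 2 := by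
  rw [strongConvexOn_iff_convex]
  have hlin : ConvexOn ℝ s fun z => 1 / 2 * ‖x‖ ^ 2 - inner ℝ x z :=
    (convexOn_const _ hf.1).sub ((innerSL ℝ x).toLinearMap.concaveOn hf.1)
  refine ((hf.smul hlam).add hlin).congr fun z _ => ?_
  simp only [Pi.add_apply, smul_eq_mul, norm_sub_sq_real, real_inner_comm]
  ring

/-- Existence and uniqueness of the proximal point: in a real Hilbert space `E`, for
`f : E → ℝ` convex and continuous and `λ > 0`, the function
`z ↦ λ f(z) + (1/2)‖z − x‖²` has a unique minimizer over `E`. -/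
theorem fire_prox_exists_unique
    {E : Type*} [NormedAddCommGroup E] [InnerProductSpace ℝ E] [CompleteSpace E]
    (f : E → ℝ) (hf : ConvexOn ℝ Set.univ f) (hfc : Continuous f)
    (lam : ℝ) (hlam : 0 < lam) (x : E) :
    ∃! z : E, ∀ w : E,
      lam * f z + (1 / 2 : ℝ) * ‖z - x‖ ^ 2 ≤ lam * f w + (1 / 2 : ℝ) * ‖w - x‖ ^ 2 :=
  (hf.strongConvexOn_mul_add_half_sq_norm_sub hlam.le x).existsUnique_forall_le one_pos
    (by fun_prop : Continuous _).lowerSemicontinuous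
    (hf.bddBelow_range_mul_add_half_sq_norm_sub hfc.continuousAt hlam.le)
end

section
/- Let E be a real Hilbert space, f : E → ℝ convex and continuous, λ > 0, and x, y ∈ E. If z_x minimizes z ↦ λ f(z) + (1/2)‖z − x‖² over E and z_y minimizes z ↦ λ f(z) + (1/2)‖z − y‖² over E, then ‖z_x − z_y‖ ≤ ‖x − y‖ (the proximal operator of a convex function is nonexpansive). -/
/-!
Testing the minimality of `z` for `h + ½‖· - x‖²` along the segment from `z` to `w`, convexity
of `h` gives `0 ≤ t (h w - h z + ⟪z - x, w - z⟫) + t²‖w - z‖²/2` for `t ∈ (0, 1]`; letting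
`t → 0` yields the variational inequality `0 ≤ h w - h z + ⟪z - x, w - z⟫`. Adding it for the two
minimizers, the values of `h` cancel and leave `‖zx - zy‖² ≤ ⟪x - y, zx - zy⟫`, from which
Cauchy–Schwarz gives nonexpansiveness.
-/

open Set Filter Topology

theorem nonneg_of_forall_mem_Ioc_nonneg_add_mul {A B : ℝ}
    (h : ∀ t ∈ Ioc (0 : ℝ) 1, 0 ≤ A + t * B) : 0 ≤ A := by
  have hlim : Tendsto (fun t : ℝ => A + t * B) (𝓝[>] 0) (𝓝 A) := by
    have := (continuous_const.add (continuous_id.mul continuous_const)).tendsto' (0 : ℝ) A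
      (by simp) (f := fun t : ℝ => A + t * B)
    exact this.mono_left nhdsWithin_le_nhds
  refine ge_of_tendsto hlim ?_
  filter_upwards [Ioc_mem_nhdsGT one_pos] with t ht using h t ht

section InnerProductSpace

variable {E : Type*} [SeminormedAddCommGroup E] [InnerProductSpace ℝ E]

theorem ConvexOn.inner_sub_nonneg_of_forall_le_add_half_norm_sq {h : E → ℝ}
    (hh : ConvexOn ℝ univ h) {x z : E}
    (hz : ∀ w, h z + (1 / 2 : ℝ) * ‖z - x‖ ^ 2 ≤ h w + (1 / 2 : ℝ) * ‖w - x‖ ^ 2) (w : E) :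
    0 ≤ h w - h z + inner ℝ (z - x) (w - z) := by
  refine nonneg_of_forall_mem_Ioc_nonneg_add_mul (B := (1 / 2 : ℝ) * ‖w - z‖ ^ 2)
    fun t ⟨ht0, ht1⟩ => ?_
  have hseg : (1 - t) • z + t • w = z + t • (w - z) := by
    rw [sub_smul, smul_sub, one_smul]; abel
  have hconv : h (z + t • (w - z)) ≤ (1 - t) * h z + t * h w := by
    simpa only [hseg, smul_eq_mul] using
      hh.2 (mem_univ z) (mem_univ w) (sub_nonneg.2 ht1) ht0.le (sub_add_cancel 1 t)
  have hnorm : ‖z + t • (w - z) - x‖ ^ 2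
      = ‖z - x‖ ^ 2 + 2 * (t * inner ℝ (z - x) (w - z)) + t ^ 2 * ‖w - z‖ ^ 2 := by
    rw [show z + t • (w - z) - x = (z - x) + t • (w - z) by abel, norm_add_sq_real,
      real_inner_smul_right, norm_smul, mul_pow, Real.norm_eq_abs, sq_abs]
  have hmin := hz (z + t • (w - z))
  rw [hnorm] at hmin
  refine nonneg_of_mul_nonneg_right ?_ ht0
  linarith

theorem ConvexOn.norm_sub_sq_le_inner_of_forall_le_add_half_norm_sq {h : E → ℝ}
    (hh : ConvexOn ℝ univ h) {x y zx zy : E}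
    (hzx : ∀ w, h zx + (1 / 2 : ℝ) * ‖zx - x‖ ^ 2 ≤ h w + (1 / 2 : ℝ) * ‖w - x‖ ^ 2)
    (hzy : ∀ w, h zy + (1 / 2 : ℝ) * ‖zy - y‖ ^ 2 ≤ h w + (1 / 2 : ℝ) * ‖w - y‖ ^ 2) :
    ‖zx - zy‖ ^ 2 ≤ inner ℝ (x - y) (zx - zy) := by
  have h1 := hh.inner_sub_nonneg_of_forall_le_add_half_norm_sq hzx zy
  have h2 := hh.inner_sub_nonneg_of_forall_le_add_half_norm_sq hzy zx
  have hsum : inner ℝ (zx - x) (zy - zx) + inner ℝ (zy - y) (zx - zy)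
      = inner ℝ (x - y) (zx - zy) - ‖zx - zy‖ ^ 2 := by
    rw [← real_inner_self_eq_norm_sq]
    simp only [inner_sub_left, inner_sub_right]
    ring
  linarith

theorem norm_le_of_norm_sq_le_inner {u v : E} (h : ‖u‖ ^ 2 ≤ inner ℝ v u) : ‖u‖ ≤ ‖v‖ := by
  have := h.trans (real_inner_le_norm v u)
  nlinarith [norm_nonneg u, norm_nonneg v]

end InnerProductSpace

theorem fire_prox_nonexpansive_general
    {E : Type*} [NormedAddCommGroup E] [InnerProductSpace ℝ E]
    (f : E → ℝ) (hf : ConvexOn ℝ Set.univ f)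
    (lam : ℝ) (hlam : 0 < lam) (x y zx zy : E)
    (hzx : ∀ w : E,
      lam * f zx + (1 / 2 : ℝ) * ‖zx - x‖ ^ 2 ≤ lam * f w + (1 / 2 : ℝ) * ‖w - x‖ ^ 2)
    (hzy : ∀ w : E,
      lam * f zy + (1 / 2 : ℝ) * ‖zy - y‖ ^ 2 ≤ lam * f w + (1 / 2 : ℝ) * ‖w - y‖ ^ 2) :
    ‖zx - zy‖ ≤ ‖x - y‖ :=
  norm_le_of_norm_sq_le_inner <|
    (hf.smul hlam.le).norm_sub_sq_le_inner_of_forall_le_add_half_norm_sq hzx hzy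

/-- The proximal operator of a convex continuous function on a real Hilbert space is
nonexpansive: if `z_x` minimizes `z ↦ λ f(z) + (1/2)‖z − x‖²` and `z_y` minimizes
`z ↦ λ f(z) + (1/2)‖z − y‖²`, then `‖z_x − z_y‖ ≤ ‖x − y‖`. -/
theorem fire_prox_nonexpansive
    {E : Type*} [NormedAddCommGroup E] [InnerProductSpace ℝ E] [CompleteSpace E]
    (f : E → ℝ) (hf : ConvexOn ℝ Set.univ f) (hfc : Continuous f)
    (lam : ℝ) (hlam : 0 < lam) (x y zx zy : E)
    (hzx : ∀ w : E,
      lam * f zx + (1 / 2 : ℝ) * ‖zx - x‖ ^ 2 ≤ lam * f w + (1 / 2 : ℝ) * ‖w - x‖ ^ 2)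
    (hzy : ∀ w : E,
      lam * f zy + (1 / 2 : ℝ) * ‖zy - y‖ ^ 2 ≤ lam * f w + (1 / 2 : ℝ) * ‖w - y‖ ^ 2) :
    ‖zx - zy‖ ≤ ‖x - y‖ :=
  fire_prox_nonexpansive_general f hf lam hlam x y zx zy hzx hzy
end

section
/- Let E be a real Hilbert space, let C_1, …, C_N ⊆ E be nonempty closed convex sets, let γ_1, …, γ_N ≥ 0 with Σ_{n=1}^N γ_n ≤ 1, let x ∈ E, and for each n let u_n ∈ C_n satisfy ‖x − u_n‖ = Metric.infDist x C_n. Then for every c ∈ ⋂_{n=1}^N C_n, ‖x − Σ_{n=1}^N γ_n (x − u_n) − c‖ ≤ ‖x − c‖ (the FiRe update u = x − Σ_n γ_n (x − P_{C_n} x) is Fejér monotone with respect to the intersection of the fixed-point sets). -/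
open RealInnerProductSpace

/-- Fejér monotonicity of the FiRe update: in a real Hilbert space, for nonempty closed
convex sets `C_1, …, C_N`, weights `γ_n ≥ 0` with `Σ γ_n ≤ 1`, and `u n` the metric
projection of `x` onto `C n`, the update `u = x − Σ_n γ_n (x − u_n)` satisfies
`‖u − c‖ ≤ ‖x − c‖` for every `c` in the intersection of the sets. -/
theorem fire_update_fejer
    {E : Type*} [NormedAddCommGroup E] [InnerProductSpace ℝ E] [CompleteSpace E]
    (N : ℕ) (C : Fin N → Set E)
    (hne : ∀ n, (C n).Nonempty) (hcl : ∀ n, IsClosed (C n)) (hconv : ∀ n, Convex ℝ (C n))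
    (gamma : Fin N → ℝ) (hγ0 : ∀ n, 0 ≤ gamma n) (hγs : ∑ n, gamma n ≤ 1)
    (x : E) (u : Fin N → E) (huC : ∀ n, u n ∈ C n)
    (hu : ∀ n, ‖x - u n‖ = Metric.infDist x (C n)) :
    ∀ c ∈ ⋂ n, C n, ‖x - (∑ n, gamma n • (x - u n)) - c‖ ≤ ‖x - c‖ := by
  intro c hc
  have hcC : ∀ n, c ∈ C n := by simpa using hc
  -- projection characterization
  have hproj : ∀ n, ∀ w ∈ C n, ⟪x - u n, w - u n⟫ ≤ 0 := by
    intro n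
    have h1 : ‖x - u n‖ = ⨅ w : C n, ‖x - w‖ := by
      rw [hu n, Metric.infDist_eq_iInf]
      congr 1; ext w; rw [dist_eq_norm]
    exact (norm_eq_iInf_iff_real_inner_le_zero (hconv n) (huC n)).mp h1
  set a : Fin N → ℝ := fun n => ‖x - u n‖ with ha
  have key : ∀ n, (a n) ^ 2 ≤ ⟪x - c, x - u n⟫ := by
    intro n
    have := hproj n c (hcC n)
    have h2 : ⟪x - u n, c - u n⟫ = ⟪x - u n, c - x⟫ + ⟪x - u n, x - u n⟫ := by
      rw [← inner_add_right]; congr 1; abel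
    have h3 : ⟪x - u n, x - u n⟫ = (a n) ^ 2 := real_inner_self_eq_norm_sq _
    have h4 : ⟪x - u n, c - x⟫ = - ⟪x - c, x - u n⟫ := by
      rw [real_inner_comm, ← inner_neg_left]; congr 1; abel
    linarith [h2 ▸ this, h3, h4]
  set S : E := ∑ n, gamma n • (x - u n) with hS
  -- inner product bound
  have hinner : ∑ n, gamma n * (a n) ^ 2 ≤ ⟪x - c, S⟫ := by
    rw [hS, inner_sum]
    apply Finset.sum_le_sum
    intro n _
    rw [real_inner_smul_right]
    exact mul_le_mul_of_nonneg_left (key n) (hγ0 n)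
  -- norm bound on S
  have hnormS : ‖S‖ ≤ ∑ n, gamma n * a n := by
    calc ‖S‖ ≤ ∑ n, ‖gamma n • (x - u n)‖ := norm_sum_le _ _
      _ = ∑ n, gamma n * a n := by
          apply Finset.sum_congr rfl; intro n _
          rw [norm_smul, Real.norm_of_nonneg (hγ0 n)]
  have hCS : (∑ n, gamma n * a n) ^ 2 ≤ ∑ n, gamma n * (a n) ^ 2 := by
    have h := Finset.sum_mul_sq_le_sq_mul_sq Finset.univ
      (fun n => Real.sqrt (gamma n)) (fun n => Real.sqrt (gamma n) * a n)
    have e1 : ∀ n : Fin N, Real.sqrt (gamma n) * (Real.sqrt (gamma n) * a n)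
        = gamma n * a n := by
      intro n; rw [← mul_assoc, Real.mul_self_sqrt (hγ0 n)]
    have e2 : ∀ n : Fin N, Real.sqrt (gamma n) ^ 2 = gamma n := fun n =>
      Real.sq_sqrt (hγ0 n)
    have e3 : ∀ n : Fin N, (Real.sqrt (gamma n) * a n) ^ 2 = gamma n * (a n) ^ 2 := by
      intro n; rw [mul_pow, e2]
    simp only [e1, e2, e3] at h
    calc (∑ n, gamma n * a n) ^ 2
        ≤ (∑ n, gamma n) * ∑ n, gamma n * (a n) ^ 2 := h
      _ ≤ 1 * ∑ n, gamma n * (a n) ^ 2 := by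
          apply mul_le_mul_of_nonneg_right hγs
          exact Finset.sum_nonneg fun n _ => mul_nonneg (hγ0 n) (sq_nonneg _)
      _ = ∑ n, gamma n * (a n) ^ 2 := one_mul _
  have hnormS2 : ‖S‖ ^ 2 ≤ ∑ n, gamma n * (a n) ^ 2 := by
    calc ‖S‖ ^ 2 ≤ (∑ n, gamma n * a n) ^ 2 := by
          apply pow_le_pow_left₀ (norm_nonneg _) hnormS
      _ ≤ _ := hCS
  have hsq : ‖x - S - c‖ ^ 2 ≤ ‖x - c‖ ^ 2 := by
    have heq : x - S - c = (x - c) - S := by abel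
    rw [heq, norm_sub_sq_real]
    have hAnn : 0 ≤ ∑ n, gamma n * (a n) ^ 2 :=
      Finset.sum_nonneg fun n _ => mul_nonneg (hγ0 n) (sq_nonneg _)
    nlinarith [hinner, hnormS2]
  exact (pow_le_pow_iff_left₀ (norm_nonneg _) (norm_nonneg _) two_ne_zero).mp hsq
end

section
/- Let E be a finite-dimensional real inner product space, f : E → ℝ convex and continuous, λ > 0, let C_1, …, C_N ⊆ E be nonempty closed convex sets, and let γ_1, …, γ_N ∈ [0,1] with Σ_{n=1}^N γ_n < 1. Define Φ(x) = λ f(x) + (1/2) Σ_{n=1}^N γ_n (Metric.infDist x C_n)², and assume Φ attains its minimum over E. Let (x_k) be any sequence such that for every k, x_{k+1} minimizes z ↦ λ f(z) + (1/2)‖z − (x_k − Σ_{n=1}^N γ_n (x_k − P_{C_n} x_k))‖² over E. Then (x_k) converges to a point x* that minimizes Φ over E. (Convex-set instance of the paper's convergence proposition for the deterministic FiRe-HQS algorithm.) -/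
/-!
FiRe-HQS is the forward–backward (proximal gradient) method with unit step for
`Φ = λ f + g`, where `g = ½ Σ γ_n d_{C_n}²`. Each `½ d_C²` is convex with gradient
`x - P_C x`, and that gradient is 1-Lipschitz, so `g` is convex and `(Σ γ_n)`-smooth with
`Σ γ_n ≤ 1`. The standard forward–backward estimate then gives, for every `w`,
`Φ(x_{k+1}) + ½‖x_{k+1} - w‖² ≤ Φ(w) + ½‖x_k - w‖²`. Summing it at a minimizer shows
`Φ(x_k) → min Φ`; the iterates stay in a ball, so a subsequence converges to a minimizer
`x*`, and since `‖x_k - x*‖` is nonincreasing the whole sequence converges to `x*`.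
-/

open Metric Filter Topology Set Finset
open scoped RealInnerProductSpace

section Descent

variable {X : Type*} [MetricSpace X] {Φ : X → ℝ} {x : ℕ → X}

def ProxDescent (Φ : X → ℝ) (x : ℕ → X) : Prop :=
  ∀ k w, Φ (x (k + 1)) + 1 / 2 * dist (x (k + 1)) w ^ 2 ≤ Φ w + 1 / 2 * dist (x k) w ^ 2

theorem ProxDescent.antitone_dist (hx : ProxDescent Φ x) {w : X} (hw : ∀ k, Φ w ≤ Φ (x k)) :
    Antitone fun k => dist (x k) w := by
  refine antitone_nat_of_succ_le fun k => ?_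
  have hsq : dist (x (k + 1)) w ^ 2 ≤ dist (x k) w ^ 2 := by linarith [hx k w, hw (k + 1)]
  exact (pow_le_pow_iff_left₀ dist_nonneg dist_nonneg two_ne_zero).mp hsq

theorem ProxDescent.tendsto_apply (hx : ProxDescent Φ x) {z : X} (hz : ∀ w, Φ z ≤ Φ w) :
    Tendsto (fun k => Φ (x k)) atTop (𝓝 (Φ z)) := by
  set a : ℕ → ℝ := fun k => Φ (x (k + 1)) - Φ z
  have ha_le : ∀ k, a k ≤ 1 / 2 * dist (x k) z ^ 2 - 1 / 2 * dist (x (k + 1)) z ^ 2 :=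
    fun k => by linarith [hx k z]
  have hsum : ∀ m, ∑ k ∈ range m, a k ≤ 1 / 2 * dist (x 0) z ^ 2 := fun m =>
    calc ∑ k ∈ range m, a k
        ≤ ∑ k ∈ range m, (1 / 2 * dist (x k) z ^ 2 - 1 / 2 * dist (x (k + 1)) z ^ 2) :=
          sum_le_sum fun k _ => ha_le k
      _ = 1 / 2 * dist (x 0) z ^ 2 - 1 / 2 * dist (x m) z ^ 2 :=
          sum_range_sub' (fun k => 1 / 2 * dist (x k) z ^ 2) m
      _ ≤ 1 / 2 * dist (x 0) z ^ 2 := by nlinarith [sq_nonneg (dist (x m) z)]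
  have ha : Tendsto a atTop (𝓝 0) :=
    (summable_of_sum_range_le (fun k => sub_nonneg.mpr (hz _)) hsum).tendsto_atTop_zero
  have hshift := (tendsto_add_atTop_iff_nat (f := fun k => Φ (x k) - Φ z) 1).mp ha
  simpa using hshift.add_const (Φ z)

theorem ProxDescent.exists_tendsto [ProperSpace X] (hx : ProxDescent Φ x)
    (hΦ : LowerSemicontinuous Φ) (hmin : ∃ z, ∀ w, Φ z ≤ Φ w) :
    ∃ xs, Tendsto x atTop (𝓝 xs) ∧ ∀ w, Φ xs ≤ Φ w := by
  obtain ⟨z, hz⟩ := hmin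
  have hball : ∀ k, x k ∈ closedBall z (dist (x 0) z) := fun k =>
    hx.antitone_dist (fun k => hz (x k)) (Nat.zero_le k)
  obtain ⟨xs, -, φ, hφ, hφxs⟩ := (isCompact_closedBall z _).tendsto_subseq hball
  have hval : Tendsto (fun j => Φ (x (φ j))) atTop (𝓝 (Φ z)) :=
    (hx.tendsto_apply hz).comp hφ.tendsto_atTop
  have hxs_le : Φ xs ≤ Φ z := le_of_forall_gt_imp_ge_of_dense fun c hc =>
    (hΦ.isClosed_preimage c).mem_of_tendsto hφxs
      ((hval.eventually (gt_mem_nhds hc)).mono fun _ h => h.le)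
  have hxs : ∀ w, Φ xs ≤ Φ w := fun w => hxs_le.trans (hz w)
  refine ⟨xs, ?_, hxs⟩
  rw [tendsto_iff_dist_tendsto_zero, tendsto_iff_tendsto_subseq_of_antitone
    (hx.antitone_dist fun k => hxs (x k)) hφ.tendsto_atTop]
  exact tendsto_iff_dist_tendsto_zero.mp hφxs

end Descent

section InnerProductSpace

variable {E : Type*} [NormedAddCommGroup E] [InnerProductSpace ℝ E]

/-- `u` is the proximal point of `h` at `y`, i.e. `u = prox_h y`. -/
def IsProx (h : E → ℝ) (y u : E) : Prop :=
  ∀ w, h u + 1 / 2 * ‖u - y‖ ^ 2 ≤ h w + 1 / 2 * ‖w - y‖ ^ 2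

theorem IsProx.add_inner_le {h : E → ℝ} (hh : ConvexOn ℝ univ h) {y u : E} (hu : IsProx h y u)
    (w : E) : h u + ⟪y - u, w - u⟫ ≤ h w := by
  -- compare `u` with the points `u + t • (w - u)` of the segment and let `t → 0`
  have hsegment : ∀ t ∈ Ioo (0 : ℝ) 1,
      h u + ⟪y - u, w - u⟫ ≤ h w + t / 2 * ‖w - u‖ ^ 2 := by
    rintro t ⟨ht0, ht1⟩
    have hconv : h (u + t • (w - u)) ≤ (1 - t) * h u + t * h w := by
      rw [show u + t • (w - u) = (1 - t) • u + t • w by module]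
      exact hh.2 (mem_univ u) (mem_univ w) (sub_nonneg.mpr ht1.le) ht0.le (sub_add_cancel 1 t)
    have hexpand : ‖u + t • (w - u) - y‖ ^ 2
        = ‖u - y‖ ^ 2 - 2 * t * ⟪y - u, w - u⟫ + t ^ 2 * ‖w - u‖ ^ 2 := by
      rw [show u + t • (w - u) - y = t • (w - u) - (y - u) by abel, norm_sub_sq_real,
        norm_smul, real_inner_smul_left, real_inner_comm, Real.norm_of_nonneg ht0.le,
        norm_sub_rev y u]
      ring
    have hscaled : t * (h u + ⟪y - u, w - u⟫) ≤ t * (h w + t / 2 * ‖w - u‖ ^ 2) := by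
      nlinarith [hu (u + t • (w - u))]
    exact (mul_le_mul_iff_right₀ ht0).mp hscaled
  have hlim : Tendsto (fun t : ℝ => h w + t / 2 * ‖w - u‖ ^ 2) (𝓝[>] 0) (𝓝 (h w)) :=
    tendsto_nhdsWithin_of_tendsto_nhds
      (Continuous.tendsto' (by fun_prop) 0 _ (by simp))
  exact ge_of_tendsto hlim (eventually_of_mem (Ioo_mem_nhdsGT one_pos) hsegment)

theorem forwardBackward_descent {h g : E → ℝ} {G : E → E} {L : ℝ} (hL : L ≤ 1)
    (hgrad : ∀ v w, g v + ⟪G v, w - v⟫ ≤ g w)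
    (hsmooth : ∀ v w, g w ≤ g v + ⟪G v, w - v⟫ + L / 2 * ‖w - v‖ ^ 2)
    {v u : E} (hu : ∀ w, h u + ⟪(v - G v) - u, w - u⟫ ≤ h w) (w : E) :
    h u + g u + 1 / 2 * ‖u - w‖ ^ 2 ≤ h w + g w + 1 / 2 * ‖v - w‖ ^ 2 := by
  have hsplit : ⟪G v, u - v⟫ - ⟪G v, w - v⟫ - ⟪(v - G v) - u, w - u⟫
      = ⟪v - u, u - w⟫ := by
    simp only [inner_sub_left, inner_sub_right]; ring
  have hpolar : 2 * ⟪v - u, u - w⟫ = ‖v - w‖ ^ 2 - ‖u - v‖ ^ 2 - ‖u - w‖ ^ 2 := by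
    rw [show v - w = (v - u) + (u - w) by abel, norm_add_sq_real, norm_sub_rev u v]; ring
  nlinarith [hgrad v w, hsmooth v u, hu w, sq_nonneg ‖u - v‖]

section Projection

variable {C : Set E} {P : E → E}

theorem half_infDist_sq_add_inner_le (hC : Convex ℝ C) (hPC : ∀ x, P x ∈ C)
    (hP : ∀ x, ‖x - P x‖ = infDist x C) (v w : E) :
    1 / 2 * infDist v C ^ 2 + ⟪v - P v, w - v⟫ ≤ 1 / 2 * infDist w C ^ 2 := by
  have hmin : ‖v - P v‖ = ⨅ c : C, ‖v - c‖ := by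
    simp only [hP, infDist_eq_iInf, dist_eq_norm]
  have hvi : ⟪v - P v, P w - P v⟫ ≤ 0 :=
    (norm_eq_iInf_iff_real_inner_le_zero hC (hPC v)).mp hmin _ (hPC w)
  have hexpand : ‖w - P w‖ ^ 2 = ‖(w - v) - (P w - P v)‖ ^ 2
      + 2 * ⟪(w - v) - (P w - P v), v - P v⟫ + ‖v - P v‖ ^ 2 := by
    rw [← norm_add_sq_real]; congr 2; abel
  have hcross : ⟪(w - v) - (P w - P v), v - P v⟫
      = ⟪v - P v, w - v⟫ - ⟪v - P v, P w - P v⟫ := by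
    rw [inner_sub_left, real_inner_comm, real_inner_comm (P w - P v)]
  rw [← hP v, ← hP w, hexpand, hcross]
  nlinarith [sq_nonneg ‖(w - v) - (P w - P v)‖]

theorem half_infDist_sq_le_add_inner (hPC : ∀ x, P x ∈ C)
    (hP : ∀ x, ‖x - P x‖ = infDist x C) (v w : E) :
    1 / 2 * infDist w C ^ 2
      ≤ 1 / 2 * infDist v C ^ 2 + ⟪v - P v, w - v⟫ + 1 / 2 * ‖w - v‖ ^ 2 := by
  have hle : infDist w C ≤ ‖(w - v) + (v - P v)‖ := by
    rw [sub_add_sub_cancel, ← dist_eq_norm]; exact infDist_le_dist_of_mem (hPC v)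
  have hsq := pow_le_pow_left₀ infDist_nonneg hle 2
  rw [norm_add_sq_real, real_inner_comm, hP] at hsq
  linarith

end Projection

section WeightedProjections

variable {ι : Type*} [Fintype ι] {C : ι → Set E} {P : ι → E → E} {γ : ι → ℝ}

theorem half_sum_infDist_sq_add_inner_le (hC : ∀ i, Convex ℝ (C i))
    (hPC : ∀ i x, P i x ∈ C i) (hP : ∀ i x, ‖x - P i x‖ = infDist x (C i))
    (hγ : ∀ i, 0 ≤ γ i) (v w : E) :
    1 / 2 * (∑ i, γ i * infDist v (C i) ^ 2) + ⟪∑ i, γ i • (v - P i v), w - v⟫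
      ≤ 1 / 2 * (∑ i, γ i * infDist w (C i) ^ 2) := by
  calc 1 / 2 * (∑ i, γ i * infDist v (C i) ^ 2) + ⟪∑ i, γ i • (v - P i v), w - v⟫
      = ∑ i, γ i * (1 / 2 * infDist v (C i) ^ 2 + ⟪v - P i v, w - v⟫) := by
        simp only [sum_inner, real_inner_smul_left, mul_sum, ← sum_add_distrib]
        exact sum_congr rfl fun i _ => by ring
    _ ≤ ∑ i, γ i * (1 / 2 * infDist w (C i) ^ 2) := sum_le_sum fun i _ =>
        mul_le_mul_of_nonneg_left (half_infDist_sq_add_inner_le (hC i) (hPC i) (hP i) v w) (hγ i)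
    _ = 1 / 2 * (∑ i, γ i * infDist w (C i) ^ 2) := by
        rw [mul_sum]; exact sum_congr rfl fun i _ => by ring

theorem half_sum_infDist_sq_le_add_inner (hPC : ∀ i x, P i x ∈ C i)
    (hP : ∀ i x, ‖x - P i x‖ = infDist x (C i)) (hγ : ∀ i, 0 ≤ γ i) (v w : E) :
    1 / 2 * (∑ i, γ i * infDist w (C i) ^ 2)
      ≤ 1 / 2 * (∑ i, γ i * infDist v (C i) ^ 2) + ⟪∑ i, γ i • (v - P i v), w - v⟫
        + (∑ i, γ i) / 2 * ‖w - v‖ ^ 2 := by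
  calc 1 / 2 * (∑ i, γ i * infDist w (C i) ^ 2)
      = ∑ i, γ i * (1 / 2 * infDist w (C i) ^ 2) := by
        rw [mul_sum]; exact sum_congr rfl fun i _ => by ring
    _ ≤ ∑ i, γ i * (1 / 2 * infDist v (C i) ^ 2 + ⟪v - P i v, w - v⟫
          + 1 / 2 * ‖w - v‖ ^ 2) := sum_le_sum fun i _ =>
        mul_le_mul_of_nonneg_left (half_infDist_sq_le_add_inner (hPC i) (hP i) v w) (hγ i)
    _ = _ := by
        simp only [sum_inner, real_inner_smul_left, mul_sum, sum_div, sum_mul,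
          ← sum_add_distrib]
        exact sum_congr rfl fun i _ => by ring

end WeightedProjections

end InnerProductSpace

theorem fire_hqs_converges_general
    {E : Type*} [NormedAddCommGroup E] [InnerProductSpace ℝ E] [FiniteDimensional ℝ E]
    (f : E → ℝ) (hf : ConvexOn ℝ Set.univ f) (hfc : Continuous f)
    (lam : ℝ) (hlam : 0 < lam)
    (N : ℕ) (C : Fin N → Set E)
    (hconv : ∀ n, Convex ℝ (C n))
    (gamma : Fin N → ℝ) (hγ0 : ∀ n, 0 ≤ gamma n)
    (hγs : ∑ n, gamma n < 1)
    (P : Fin N → E → E) (hPC : ∀ n x, P n x ∈ C n)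
    (hP : ∀ n x, ‖x - P n x‖ = Metric.infDist x (C n))
    (Φ : E → ℝ)
    (hΦ : ∀ x : E,
      Φ x = lam * f x + (1 / 2 : ℝ) * ∑ n, gamma n * (Metric.infDist x (C n)) ^ 2)
    (hmin : ∃ z : E, ∀ w : E, Φ z ≤ Φ w)
    (x : ℕ → E)
    (hx : ∀ k : ℕ, ∀ w : E,
      lam * f (x (k + 1)) +
          (1 / 2 : ℝ) * ‖x (k + 1) - (x k - ∑ n, gamma n • (x k - P n (x k)))‖ ^ 2 ≤
        lam * f w +
          (1 / 2 : ℝ) * ‖w - (x k - ∑ n, gamma n • (x k - P n (x k)))‖ ^ 2) :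
    ∃ xs : E, Filter.Tendsto x Filter.atTop (nhds xs) ∧ ∀ w : E, Φ xs ≤ Φ w := by
  have hΦc : Continuous Φ := by rw [funext hΦ]; fun_prop
  refine ProxDescent.exists_tendsto (fun k w => ?_) hΦc.lowerSemicontinuous hmin
  have hprox : IsProx (fun z => lam * f z) _ (x (k + 1)) := hx k
  have hconvex : ConvexOn ℝ univ (fun z => lam * f z) := hf.smul hlam.le
  have hstep := forwardBackward_descent (h := fun z => lam * f z) hγs.le
    (half_sum_infDist_sq_add_inner_le hconv hPC hP hγ0)
    (half_sum_infDist_sq_le_add_inner hPC hP hγ0)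
    (hprox.add_inner_le hconvex) w
  simpa only [hΦ, dist_eq_norm] using hstep

/-- Convergence of the deterministic FiRe-HQS algorithm (convex-set instance): in a
finite-dimensional real inner product space, for `f` convex continuous, `λ > 0`,
nonempty closed convex sets `C_1, …, C_N` with metric projections `P n`, weights
`γ_n ∈ [0,1]` with `Σ γ_n < 1`, and objective
`Φ(x) = λ f(x) + (1/2) Σ_n γ_n (infDist x (C n))²` attaining its minimum, any sequence
satisfying the FiRe-HQS iteration `x_{k+1} = prox_{λf}(x_k − Σ_n γ_n (x_k − P_n x_k))`
converges to a minimizer of `Φ`. -/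
theorem fire_hqs_converges
    {E : Type*} [NormedAddCommGroup E] [InnerProductSpace ℝ E] [FiniteDimensional ℝ E]
    (f : E → ℝ) (hf : ConvexOn ℝ Set.univ f) (hfc : Continuous f)
    (lam : ℝ) (hlam : 0 < lam)
    (N : ℕ) (C : Fin N → Set E)
    (hne : ∀ n, (C n).Nonempty) (hcl : ∀ n, IsClosed (C n)) (hconv : ∀ n, Convex ℝ (C n))
    (gamma : Fin N → ℝ) (hγ0 : ∀ n, 0 ≤ gamma n) (hγ1 : ∀ n, gamma n ≤ 1)
    (hγs : ∑ n, gamma n < 1)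
    (P : Fin N → E → E) (hPC : ∀ n x, P n x ∈ C n)
    (hP : ∀ n x, ‖x - P n x‖ = Metric.infDist x (C n))
    (Φ : E → ℝ)
    (hΦ : ∀ x : E,
      Φ x = lam * f x + (1 / 2 : ℝ) * ∑ n, gamma n * (Metric.infDist x (C n)) ^ 2)
    (hmin : ∃ z : E, ∀ w : E, Φ z ≤ Φ w)
    (x : ℕ → E)
    (hx : ∀ k : ℕ, ∀ w : E,
      lam * f (x (k + 1)) +
          (1 / 2 : ℝ) * ‖x (k + 1) - (x k - ∑ n, gamma n • (x k - P n (x k)))‖ ^ 2 ≤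
        lam * f w +
          (1 / 2 : ℝ) * ‖w - (x k - ∑ n, gamma n • (x k - P n (x k)))‖ ^ 2) :
    ∃ xs : E, Filter.Tendsto x Filter.atTop (nhds xs) ∧ ∀ w : E, Φ xs ≤ Φ w :=
  fire_hqs_converges_general f hf hfc lam hlam N C hconv gamma hγ0 hγs P hPC hP Φ hΦ hmin x hx
end

section
/- Let E be a finite-dimensional real inner product space, let C_1, …, C_N ⊆ E be nonempty closed convex sets with ⋂_{n=1}^N C_n ≠ ∅, and let γ_1, …, γ_N > 0 with Σ_{n=1}^N γ_n ≤ 1. Then for any x_0 ∈ E, the sequence defined by x_{k+1} = x_k − Σ_{n=1}^N γ_n (x_k − P_{C_n} x_k) converges to a point of ⋂_{n=1}^N C_n. (The paper's remark that, when the restoration networks share a common fixed point and f = 0, the FiRe iteration converges to a common fixed point of all restoration networks, in the convex case.) -/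
open Filter Metric
open scoped InnerProductSpace


/-- When the sets share a common point and `f = 0`, the FiRe iteration converges to a
common point: in a finite-dimensional real inner product space, for nonempty closed
convex sets `C_1, …, C_N` with nonempty intersection and metric projections `P n`, and
weights `γ_n > 0` with `Σ γ_n ≤ 1`, the sequence
`x_{k+1} = x_k − Σ_n γ_n (x_k − P_n x_k)` converges to a point of `⋂_n C_n`. -/
theorem fire_common_fixed_point_convergence
    {E : Type*} [NormedAddCommGroup E] [InnerProductSpace ℝ E] [FiniteDimensional ℝ E]
    (N : ℕ) (C : Fin N → Set E)
    (hne : ∀ n, (C n).Nonempty) (hcl : ∀ n, IsClosed (C n)) (hconv : ∀ n, Convex ℝ (C n))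
    (hinter : (⋂ n, C n).Nonempty)
    (gamma : Fin N → ℝ) (hγ0 : ∀ n, 0 < gamma n) (hγs : ∑ n, gamma n ≤ 1)
    (P : Fin N → E → E) (hPC : ∀ n x, P n x ∈ C n)
    (hP : ∀ n x, ‖x - P n x‖ = Metric.infDist x (C n))
    (x0 : E) (x : ℕ → E) (hx0 : x 0 = x0)
    (hx : ∀ k : ℕ, x (k + 1) = x k - ∑ n, gamma n • (x k - P n (x k))) :
    ∃ p ∈ ⋂ n, C n, Filter.Tendsto x Filter.atTop (nhds p) := by
  obtain ⟨p₀, hp₀⟩ := hinter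
  -- projection variational inequality
  have proj : ∀ n (y : E), ∀ w ∈ C n, ⟪y - P n y, w - P n y⟫_ℝ ≤ 0 := by
    intro n y
    have h1 : ‖y - P n y‖ = ⨅ w : C n, ‖y - w‖ := by
      rw [hP n y, Metric.infDist_eq_iInf]
      congr 1; ext w; rw [dist_eq_norm]
    exact (norm_eq_iInf_iff_real_inner_le_zero (hconv n) (hPC n y)).1 h1
  -- key Fejér inequality
  have key : ∀ (p : E), p ∈ (⋂ n, C n) → ∀ k,
      ‖x (k+1) - p‖^2 + ∑ n, gamma n * ‖x k - P n (x k)‖^2 ≤ ‖x k - p‖^2 := by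
    intro p hp k
    set v : Fin N → E := fun n => x k - P n (x k) with hv
    have hxk : x (k+1) - p = (x k - p) - ∑ n, gamma n • v n := by rw [hx k]; abel
    have hip : ∀ n, ‖v n‖^2 ≤ ⟪x k - p, v n⟫_ℝ := by
      intro n
      have h0 := proj n (x k) p (Set.mem_iInter.1 hp n)
      have hsplit : x k - p = v n - (p - P n (x k)) := by simp only [hv]; abel
      have hcomm : ⟪p - P n (x k), v n⟫_ℝ ≤ 0 := by
        rw [real_inner_comm]; exact h0
      calc ‖v n‖^2 = ⟪v n, v n⟫_ℝ - 0 := by rw [real_inner_self_eq_norm_sq]; ring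
        _ ≤ ⟪v n, v n⟫_ℝ - ⟪p - P n (x k), v n⟫_ℝ := by linarith
        _ = ⟪x k - p, v n⟫_ℝ := by
            conv_rhs => rw [hsplit, inner_sub_left]
    have Snn : (0:ℝ) ≤ ∑ n, gamma n * ‖v n‖^2 :=
      Finset.sum_nonneg fun n _ => mul_nonneg (hγ0 n).le (sq_nonneg _)
    have hs : ‖∑ n, gamma n • v n‖^2 ≤ ∑ n, gamma n * ‖v n‖^2 := by
      have h1 : ‖∑ n, gamma n • v n‖ ≤ ∑ n, gamma n * ‖v n‖ := by
        calc ‖∑ n, gamma n • v n‖ ≤ ∑ n, ‖gamma n • v n‖ := norm_sum_le _ _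
          _ = ∑ n, gamma n * ‖v n‖ := by
            refine Finset.sum_congr rfl fun n _ => ?_
            rw [norm_smul, Real.norm_of_nonneg (hγ0 n).le]
      have cs := Finset.sum_mul_sq_le_sq_mul_sq Finset.univ
        (fun n => Real.sqrt (gamma n)) (fun n => Real.sqrt (gamma n) * ‖v n‖)
      have e1 : ∀ n : Fin N, Real.sqrt (gamma n) * (Real.sqrt (gamma n) * ‖v n‖)
          = gamma n * ‖v n‖ := fun n => by
        rw [← mul_assoc, Real.mul_self_sqrt (hγ0 n).le]
      have e2 : ∀ n : Fin N, Real.sqrt (gamma n) ^ 2 = gamma n := fun n =>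
        Real.sq_sqrt (hγ0 n).le
      have e3 : ∀ n : Fin N, (Real.sqrt (gamma n) * ‖v n‖) ^ 2 = gamma n * ‖v n‖^2 :=
        fun n => by rw [mul_pow, e2]
      simp only [e1, e2, e3] at cs
      have h2 : (∑ n, gamma n * ‖v n‖)^2 ≤ (∑ n, gamma n) * ∑ n, gamma n * ‖v n‖^2 := cs
      have h3 : (∑ n, gamma n) * (∑ n, gamma n * ‖v n‖^2) ≤ ∑ n, gamma n * ‖v n‖^2 :=
        mul_le_of_le_one_left Snn hγs
      calc ‖∑ n, gamma n • v n‖^2 ≤ (∑ n, gamma n * ‖v n‖)^2 := by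
            apply pow_le_pow_left₀ (norm_nonneg _) h1
        _ ≤ (∑ n, gamma n) * ∑ n, gamma n * ‖v n‖^2 := h2
        _ ≤ ∑ n, gamma n * ‖v n‖^2 := h3
    have expand : ‖x (k+1) - p‖^2 = ‖x k - p‖^2
        - 2*⟪x k - p, ∑ n, gamma n • v n⟫_ℝ + ‖∑ n, gamma n • v n‖^2 := by
      rw [hxk, norm_sub_sq_real]
    have hinner_sum : ∑ n, gamma n * ‖v n‖^2 ≤ ⟪x k - p, ∑ n, gamma n • v n⟫_ℝ := by
      rw [inner_sum]
      refine Finset.sum_le_sum fun n _ => ?_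
      rw [real_inner_smul_right]
      exact mul_le_mul_of_nonneg_left (hip n) (hγ0 n).le
    linarith
  have Snn : ∀ k, (0:ℝ) ≤ ∑ n, gamma n * ‖x k - P n (x k)‖^2 := fun k =>
    Finset.sum_nonneg fun n _ => mul_nonneg (hγ0 n).le (sq_nonneg _)
  have mono : ∀ p ∈ (⋂ n, C n), Antitone fun k => ‖x k - p‖^2 := by
    intro p hp
    refine antitone_nat_of_succ_le fun k => ?_
    have := key p hp k
    linarith [Snn k]
  -- sequence is bounded
  have hball : ∀ k, x k ∈ Metric.closedBall p₀ ‖x 0 - p₀‖ := by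
    intro k
    have h1 : ‖x k - p₀‖^2 ≤ ‖x 0 - p₀‖^2 := mono p₀ hp₀ (Nat.zero_le k)
    have : ‖x k - p₀‖ ≤ ‖x 0 - p₀‖ := by nlinarith [norm_nonneg (x k - p₀), norm_nonneg (x 0 - p₀)]
    simpa [Metric.mem_closedBall, dist_eq_norm] using this
  obtain ⟨q, hq, φ, hφ, hφt⟩ :=
    (isCompact_closedBall p₀ ‖x 0 - p₀‖).tendsto_subseq hball
  -- residuals tend to zero
  have hbdd : BddBelow (Set.range fun k => ‖x k - p₀‖^2) :=
    ⟨0, by rintro _ ⟨k, rfl⟩; positivity⟩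
  have hL : Tendsto (fun k => ‖x k - p₀‖^2) atTop (nhds (⨅ k, ‖x k - p₀‖^2)) :=
    tendsto_atTop_ciInf (mono p₀ hp₀) hbdd
  have hL1 : Tendsto (fun k => ‖x (k+1) - p₀‖^2) atTop (nhds (⨅ k, ‖x k - p₀‖^2)) :=
    hL.comp (tendsto_add_atTop_nat 1)
  have hres : Tendsto (fun k => ∑ n, gamma n * ‖x k - P n (x k)‖^2) atTop (nhds 0) := by
    have hdiff : Tendsto (fun k => ‖x k - p₀‖^2 - ‖x (k+1) - p₀‖^2) atTop (nhds 0) := by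
      have := hL.sub hL1
      simpa using this
    refine squeeze_zero Snn (fun k => ?_) hdiff
    have := key p₀ hp₀ k
    linarith
  have hresn : ∀ n, Tendsto (fun k => ‖x k - P n (x k)‖) atTop (nhds 0) := by
    intro n
    have hterm : Tendsto (fun k => gamma n * ‖x k - P n (x k)‖^2) atTop (nhds 0) := by
      refine squeeze_zero (fun k => mul_nonneg (hγ0 n).le (sq_nonneg _)) (fun k => ?_) hres
      exact Finset.single_le_sum (f := fun m => gamma m * ‖x k - P m (x k)‖^2)
        (fun m _ => mul_nonneg (hγ0 m).le (sq_nonneg _))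
        (Finset.mem_univ n)
    have hsq : Tendsto (fun k => ‖x k - P n (x k)‖^2) atTop (nhds 0) := by
      have := hterm.const_mul (gamma n)⁻¹
      simpa [← mul_assoc, inv_mul_cancel₀ (hγ0 n).ne'] using this
    have h' := (Real.continuous_sqrt.tendsto 0).comp hsq
    simpa [Function.comp_def, Real.sqrt_sq (norm_nonneg _)] using h'
  -- the cluster point is in every C n
  have hqC : q ∈ ⋂ n, C n := by
    refine Set.mem_iInter.2 fun n => ?_
    have hd : Tendsto (fun j => Metric.infDist (x (φ j)) (C n)) atTop
        (nhds (Metric.infDist q (C n))) :=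
      ((Metric.continuous_infDist_pt (C n)).tendsto q).comp hφt
    have hd0 : Tendsto (fun j => Metric.infDist (x (φ j)) (C n)) atTop (nhds 0) := by
      have := (hresn n).comp hφ.tendsto_atTop
      simpa [Function.comp_def, hP] using this
    have : Metric.infDist q (C n) = 0 := tendsto_nhds_unique hd hd0
    exact ((hcl n).mem_iff_infDist_zero (hne n)).2 this
  -- Fejér monotone with cluster point → convergence
  refine ⟨q, hqC, ?_⟩
  have hbdd' : BddBelow (Set.range fun k => ‖x k - q‖^2) :=
    ⟨0, by rintro _ ⟨k, rfl⟩; positivity⟩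
  have hLq : Tendsto (fun k => ‖x k - q‖^2) atTop (nhds (⨅ k, ‖x k - q‖^2)) :=
    tendsto_atTop_ciInf (mono q hqC) hbdd'
  have hsub0 : Tendsto (fun j => ‖x (φ j) - q‖^2) atTop (nhds 0) := by
    have h1 : Tendsto (fun j => ‖x (φ j) - q‖) atTop (nhds 0) := by
      have := tendsto_iff_norm_sub_tendsto_zero.1 hφt
      simpa [Function.comp_def] using this
    have := h1.pow 2
    simpa using this
  have hsubL : Tendsto (fun j => ‖x (φ j) - q‖^2) atTop (nhds (⨅ k, ‖x k - q‖^2)) :=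
    hLq.comp hφ.tendsto_atTop
  have hL0 : (⨅ k, ‖x k - q‖^2) = 0 := tendsto_nhds_unique hsubL hsub0
  rw [hL0] at hLq
  have hn : Tendsto (fun k => ‖x k - q‖) atTop (nhds 0) := by
    have h' := (Real.continuous_sqrt.tendsto 0).comp hLq
    simpa [Function.comp_def, Real.sqrt_sq (norm_nonneg _)] using h'
  exact tendsto_iff_norm_sub_tendsto_zero.2 hn
end

section
/- Let E be a real Hilbert space, f : E → ℝ convex and continuous, λ > 0, let C_1, …, C_N ⊆ E be nonempty closed convex sets, and let γ_1, …, γ_N ≥ 0 with Σ_{n=1}^N γ_n ≤ 1. Define Φ(x) = λ f(x) + (1/2) Σ_{n=1}^N γ_n (Metric.infDist x C_n)². If x ∈ E and x⁺ minimizes z ↦ λ f(z) + (1/2)‖z − (x − Σ_{n=1}^N γ_n (x − P_{C_n} x))‖² over E, then Φ(x⁺) ≤ Φ(x) (each FiRe-HQS step does not increase the objective). -/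
/-!
The squared distances to the projections `P n x` majorize the squared distances to the sets, with
equality at `x`. Expanding around `x`, the weighted sum `Σ γ_n ‖z - P n x‖²` equals the prox quadratic
`‖z - (x - Σ γ_n (x - P n x))‖²` plus `(Σ γ_n - 1) ‖z - x‖² ≤ 0` plus a constant, so a minimizer of
`λ f + ½ ‖· - (x - Σ γ_n (x - P n x))‖²` decreases this majorant of `Φ`, hence `Φ` itself.
-/

open Finset

section WeightedSquares

variable {E ι : Type*} [NormedAddCommGroup E] [InnerProductSpace ℝ E]

theorem sum_mul_norm_add_sq (s : Finset ι) (w : ι → ℝ) (d : E) (v : ι → E) :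
    ∑ i ∈ s, w i * ‖d + v i‖ ^ 2 =
      ‖d + ∑ i ∈ s, w i • v i‖ ^ 2 + (∑ i ∈ s, w i - 1) * ‖d‖ ^ 2 +
        (∑ i ∈ s, w i * ‖v i‖ ^ 2 - ‖∑ i ∈ s, w i • v i‖ ^ 2) := by
  have inner_avg : inner ℝ d (∑ i ∈ s, w i • v i) = ∑ i ∈ s, w i * inner ℝ d (v i) := by
    simp only [inner_sum, real_inner_smul_right]
  simp only [norm_add_sq_real, inner_avg, mul_add, sum_add_distrib, ← sum_mul, mul_sum]
  ring_nf

theorem sum_mul_norm_sub_sq_le (s : Finset ι) (w : ι → ℝ) (hw : ∑ i ∈ s, w i ≤ 1)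
    (p : ι → E) (x z : E) :
    ∑ i ∈ s, w i * ‖z - p i‖ ^ 2 ≤
      ∑ i ∈ s, w i * ‖x - p i‖ ^ 2 + ‖z - (x - ∑ i ∈ s, w i • (x - p i))‖ ^ 2 -
        ‖∑ i ∈ s, w i • (x - p i)‖ ^ 2 := by
  have expand := sum_mul_norm_add_sq s w (z - x) (fun i ↦ x - p i)
  simp only [sub_add_sub_cancel] at expand
  rw [sub_sub_eq_add_sub, add_sub_right_comm z, expand]
  nlinarith [sq_nonneg ‖z - x‖]

end WeightedSquares

theorem fire_hqs_step_descent_general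
    {E : Type*} [NormedAddCommGroup E] [InnerProductSpace ℝ E]
    (f : E → ℝ)
    (lam : ℝ)
    (N : ℕ) (C : Fin N → Set E)
    (gamma : Fin N → ℝ) (hγ0 : ∀ n, 0 ≤ gamma n) (hγs : ∑ n, gamma n ≤ 1)
    (P : Fin N → E → E) (hPC : ∀ n x, P n x ∈ C n)
    (hP : ∀ n x, ‖x - P n x‖ = Metric.infDist x (C n))
    (Φ : E → ℝ)
    (hΦ : ∀ x : E,
      Φ x = lam * f x + (1 / 2 : ℝ) * ∑ n, gamma n * (Metric.infDist x (C n)) ^ 2)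
    (x xplus : E)
    (hxplus : ∀ w : E,
      lam * f xplus +
          (1 / 2 : ℝ) * ‖xplus - (x - ∑ n, gamma n • (x - P n x))‖ ^ 2 ≤
        lam * f w + (1 / 2 : ℝ) * ‖w - (x - ∑ n, gamma n • (x - P n x))‖ ^ 2) :
    Φ xplus ≤ Φ x := by
  have infDist_le : ∑ n, gamma n * Metric.infDist xplus (C n) ^ 2 ≤
      ∑ n, gamma n * ‖xplus - P n x‖ ^ 2 := by
    gcongr with n
    · exact hγ0 n
    · exact Metric.infDist_nonneg
    · rw [← dist_eq_norm]
      exact Metric.infDist_le_dist_of_mem (hPC n x)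
  have majorant := sum_mul_norm_sub_sq_le univ gamma hγs (fun n ↦ P n x) x xplus
  have prox_le := hxplus x
  rw [sub_sub_cancel] at prox_le
  have hΦx : Φ x = lam * f x + (1 / 2 : ℝ) * ∑ n, gamma n * ‖x - P n x‖ ^ 2 := by
    simp only [hΦ, hP]
  rw [hΦ, hΦx]
  linarith

/-- Each FiRe-HQS step does not increase the objective: in a real Hilbert space, for `f`
convex continuous, `λ > 0`, nonempty closed convex sets `C_1, …, C_N` with metric
projections `P n`, weights `γ_n ≥ 0` with `Σ γ_n ≤ 1`, and objective
`Φ(x) = λ f(x) + (1/2) Σ_n γ_n (infDist x (C n))²`, if `x⁺` is the FiRe-HQS update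
`prox_{λf}(x − Σ_n γ_n (x − P_n x))` of `x`, then `Φ(x⁺) ≤ Φ(x)`. -/
theorem fire_hqs_step_descent
    {E : Type*} [NormedAddCommGroup E] [InnerProductSpace ℝ E] [CompleteSpace E]
    (f : E → ℝ) (hf : ConvexOn ℝ Set.univ f) (hfc : Continuous f)
    (lam : ℝ) (hlam : 0 < lam)
    (N : ℕ) (C : Fin N → Set E)
    (hne : ∀ n, (C n).Nonempty) (hcl : ∀ n, IsClosed (C n)) (hconv : ∀ n, Convex ℝ (C n))
    (gamma : Fin N → ℝ) (hγ0 : ∀ n, 0 ≤ gamma n) (hγs : ∑ n, gamma n ≤ 1)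
    (P : Fin N → E → E) (hPC : ∀ n x, P n x ∈ C n)
    (hP : ∀ n x, ‖x - P n x‖ = Metric.infDist x (C n))
    (Φ : E → ℝ)
    (hΦ : ∀ x : E,
      Φ x = lam * f x + (1 / 2 : ℝ) * ∑ n, gamma n * (Metric.infDist x (C n)) ^ 2)
    (x xplus : E)
    (hxplus : ∀ w : E,
      lam * f xplus +
          (1 / 2 : ℝ) * ‖xplus - (x - ∑ n, gamma n • (x - P n x))‖ ^ 2 ≤
        lam * f w + (1 / 2 : ℝ) * ‖w - (x - ∑ n, gamma n • (x - P n x))‖ ^ 2) :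
    Φ xplus ≤ Φ x :=
  fire_hqs_step_descent_general f lam N C gamma hγ0 hγs P hPC hP Φ hΦ x xplus hxplus
end

section
/- Let n be a natural number, let μ be a probability measure on EuclideanSpace ℝ (Fin n) with finite first moment (∫ ‖x‖ dμ(x) < ∞), and let σ > 0. Define p(y) = ∫ exp(−‖y − x‖²/(2σ²)) dμ(x) and m(y) = ∫ x · exp(−‖y − x‖²/(2σ²)) dμ(x) (a Bochner integral, which exists). Then for every y: p(y) > 0; p has gradient (m(y) − p(y)·y)/σ² at y; and consequently the function log ∘ p has gradient (m(y)/p(y) − y)/σ² at y. In particular, writing R(y) = m(y)/p(y) for the minimum mean square error denoiser (posterior mean), Tweedie's formula holds: ∇_y log p_σ(y) = (R(y) − y)/σ². -/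
/-!
Differentiation under the integral sign. The kernel `exp (-‖y - x‖² / (2σ²))` has `y`-gradient
`σ⁻² exp (-‖y - x‖² / (2σ²)) (x - y)`, and `‖y - x‖ exp (-‖y - x‖² / (2σ²)) ≤ σ`, so these
gradients are bounded uniformly in `x` and `y` and dominated convergence applies against the
finite measure `μ`.
The gradient of `p` is therefore `σ⁻² (m y - p y • y)`, and since `p > 0` the chain rule for `log`
gives Tweedie's formula.
-/

open MeasureTheory InnerProductSpace Real

lemma mul_exp_neg_sq_div_le {σ : ℝ} (hσ : 0 < σ) (t : ℝ) :
    t * exp (-t ^ 2 / (2 * σ ^ 2)) ≤ σ := by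
  -- `t ≤ σ (1 + t² / (2σ²)) ≤ σ exp (t² / (2σ²))`
  have hamgm : t ≤ σ * (t ^ 2 / (2 * σ ^ 2) + 1) := by
    have : σ * (t ^ 2 / (2 * σ ^ 2) + 1) - t = ((t - σ) ^ 2 + σ ^ 2) / (2 * σ) := by
      field_simp; ring
    linarith [show 0 ≤ ((t - σ) ^ 2 + σ ^ 2) / (2 * σ) by positivity]
  have hexp := add_one_le_exp (t ^ 2 / (2 * σ ^ 2))
  rw [neg_div, exp_neg, ← div_eq_mul_inv, div_le_iff₀ (exp_pos _)]
  nlinarith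

lemma HasGradientAt.log {F : Type*} [NormedAddCommGroup F] [InnerProductSpace ℝ F] [CompleteSpace F]
    {f : F → ℝ} {g y : F} (hf : HasGradientAt f g y) (hy : f y ≠ 0) :
    HasGradientAt (fun z => log (f z)) ((f y)⁻¹ • g) y := by
  rw [hasGradientAt_iff_hasFDerivAt, map_smul]
  exact hf.hasFDerivAt.log hy

section GaussKernel

variable {E : Type*} [NormedAddCommGroup E]

noncomputable def gaussKernel (σ : ℝ) (y x : E) : ℝ := exp (-‖y - x‖ ^ 2 / (2 * σ ^ 2))

lemma gaussKernel_pos (σ : ℝ) (y x : E) : 0 < gaussKernel σ y x := exp_pos _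

lemma gaussKernel_le_one (σ : ℝ) (y x : E) : gaussKernel σ y x ≤ 1 :=
  exp_le_one_iff.2 <| div_nonpos_of_nonpos_of_nonneg (neg_nonpos.2 (by positivity)) (by positivity)

lemma continuous_gaussKernel_right (σ : ℝ) (y : E) : Continuous (gaussKernel σ y) := by
  unfold gaussKernel; fun_prop

lemma norm_sub_mul_gaussKernel_le {σ : ℝ} (hσ : 0 < σ) (y x : E) :
    ‖y - x‖ * gaussKernel σ y x ≤ σ :=
  mul_exp_neg_sq_div_le hσ _

variable [MeasurableSpace E] [BorelSpace E] (μ : Measure E) [IsFiniteMeasure μ]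

lemma integrable_gaussKernel (σ : ℝ) (y : E) : Integrable (gaussKernel σ y) μ :=
  .of_bound (continuous_gaussKernel_right σ y).aestronglyMeasurable 1 <| .of_forall fun x => by
    rw [Real.norm_of_nonneg (gaussKernel_pos σ y x).le]
    exact gaussKernel_le_one σ y x

lemma integral_gaussKernel_pos [NeZero μ] (σ : ℝ) (y : E) : 0 < ∫ x, gaussKernel σ y x ∂μ :=
  integral_exp_pos (integrable_gaussKernel μ σ y)

variable [NormedSpace ℝ E] [SecondCountableTopology E] {σ : ℝ} (hσ : 0 < σ)
include hσ

lemma integrable_gaussKernel_smul_sub (y : E) :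
    Integrable (fun x => gaussKernel σ y x • (x - y)) μ :=
  .of_bound (by have := continuous_gaussKernel_right σ y; fun_prop) σ <| .of_forall fun x => by
    rw [norm_smul, Real.norm_of_nonneg (gaussKernel_pos σ y x).le, norm_sub_rev, mul_comm]
    exact norm_sub_mul_gaussKernel_le hσ y x

lemma integrable_gaussKernel_smul (y : E) : Integrable (fun x => gaussKernel σ y x • x) μ :=
  ((integrable_gaussKernel_smul_sub μ hσ y).add ((integrable_gaussKernel μ σ y).smul_const y)).congr
    (.of_forall fun x => by simp [smul_sub])

end GaussKernel

section Gradient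

variable {E : Type*} [NormedAddCommGroup E] [InnerProductSpace ℝ E]

lemma hasGradientAt_gaussKernel [CompleteSpace E] (σ : ℝ) (x y : E) :
    HasGradientAt (gaussKernel σ · x) ((σ ^ 2)⁻¹ • gaussKernel σ y x • (x - y)) y := by
  have h := (((hasFDerivAt_id y).sub_const x).norm_sq.const_mul (-(2 * σ ^ 2)⁻¹)).exp
  refine (h.congr_fderiv ?_).congr_of_eventuallyEq (.of_forall fun z => ?_)
  · ext v
    simp only [mul_inv_rev, id_eq, neg_mul, map_sub, ContinuousLinearMap.comp_id, neg_smul,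
      smul_neg, neg_apply, smul_apply, sub_apply, coe_innerSL_apply, nsmul_eq_mul, Nat.cast_ofNat,
      smul_eq_mul, gaussKernel, map_smul, toDual_apply_apply]
    ring_nf
  · simp [gaussKernel, div_eq_inv_mul]

variable [MeasurableSpace E] [BorelSpace E] (μ : Measure E) [IsFiniteMeasure μ]
  [SecondCountableTopology E] {σ : ℝ} (hσ : 0 < σ)
include hσ

lemma hasGradientAt_integral_gaussKernel [CompleteSpace E] (y : E) :
    HasGradientAt (fun z => ∫ x, gaussKernel σ z x ∂μ)
      ((σ ^ 2)⁻¹ • ∫ x, gaussKernel σ y x • (x - y) ∂μ) y := by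
  have hderiv := hasFDerivAt_integral_of_dominated_of_fderiv_le (𝕜 := ℝ) (μ := μ)
    (F' := fun z x => toDual ℝ E ((σ ^ 2)⁻¹ • gaussKernel σ z x • (x - z)))
    (bound := fun _ => σ⁻¹) (Filter.univ_mem)
    (.of_forall fun z => (integrable_gaussKernel μ σ z).aestronglyMeasurable)
    (integrable_gaussKernel μ σ y) ?_ ?_ (integrable_const _)
    (.of_forall fun x z _ => (hasGradientAt_gaussKernel σ x z).hasFDerivAt)
  · rw [hasGradientAt_iff_hasFDerivAt, ← integral_smul]
    exact hderiv.congr_fderiv ((toDual ℝ E).toLinearIsometry.integral_comp_comm _)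
  · have := continuous_gaussKernel_right σ y
    exact (toDual ℝ E).continuous.comp_aestronglyMeasurable (by fun_prop)
  · refine .of_forall fun x z _ => ?_
    rw [LinearIsometryEquiv.norm_map, norm_smul, norm_smul, norm_inv, norm_pow,
      Real.norm_of_nonneg hσ.le, Real.norm_of_nonneg (gaussKernel_pos σ z x).le, norm_sub_rev, mul_comm (gaussKernel σ z x)]
    calc (σ ^ 2)⁻¹ * (‖z - x‖ * gaussKernel σ z x) ≤ (σ ^ 2)⁻¹ * σ := by
          gcongr; exact norm_sub_mul_gaussKernel_le hσ z x
      _ = σ⁻¹ := by field_simp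

end Gradient

theorem tweedie_formula_general
    (n : ℕ) (μ : Measure (EuclideanSpace ℝ (Fin n))) [IsProbabilityMeasure μ]
    (σ : ℝ) (hσ : 0 < σ)
    (p : EuclideanSpace ℝ (Fin n) → ℝ)
    (hp : ∀ y, p y = ∫ x, Real.exp (-‖y - x‖ ^ 2 / (2 * σ ^ 2)) ∂μ)
    (m : EuclideanSpace ℝ (Fin n) → EuclideanSpace ℝ (Fin n))
    (hm : ∀ y, m y = ∫ x, Real.exp (-‖y - x‖ ^ 2 / (2 * σ ^ 2)) • x ∂μ) :
    ∀ y : EuclideanSpace ℝ (Fin n),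
      0 < p y ∧
      HasGradientAt p ((σ ^ 2)⁻¹ • (m y - p y • y)) y ∧
      HasGradientAt (fun z => Real.log (p z)) ((σ ^ 2)⁻¹ • ((p y)⁻¹ • m y - y)) y := by
  intro y
  have hp_eq : p = fun z => ∫ x, gaussKernel σ z x ∂μ := funext hp
  have hmean : ∫ x, gaussKernel σ y x • (x - y) ∂μ = m y - p y • y := by
    simp_rw [smul_sub]
    rw [integral_sub (integrable_gaussKernel_smul μ hσ y)
      ((integrable_gaussKernel μ σ y).smul_const y), integral_smul_const, hm, hp]
    rfl
  have hpos : 0 < p y := hp_eq ▸ integral_gaussKernel_pos μ σ y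
  have hgrad : HasGradientAt p ((σ ^ 2)⁻¹ • (m y - p y • y)) y := by
    rw [← hmean, hp_eq]
    exact hasGradientAt_integral_gaussKernel μ hσ y
  refine ⟨hpos, hgrad, ?_⟩
  convert hgrad.log hpos.ne' using 1
  rw [smul_comm, smul_sub ((p y)⁻¹), smul_smul ((p y)⁻¹), inv_mul_cancel₀ hpos.ne', one_smul]

/-- Tweedie's formula: let `μ` be a probability measure on `ℝⁿ` with finite first
moment and `σ > 0`. With `p(y) = ∫ exp(−‖y − x‖²/(2σ²)) dμ(x)` (the unnormalized density
of `x + N(0, σ² Id)` noise) and `m(y) = ∫ exp(−‖y − x‖²/(2σ²)) • x dμ(x)`, for every `y`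
we have `p(y) > 0`, `p` has gradient `(m(y) − p(y)·y)/σ²` at `y`, and `log ∘ p` has
gradient `(m(y)/p(y) − y)/σ² = (R(y) − y)/σ²` at `y`, where `R(y) = m(y)/p(y)` is the
MMSE denoiser (posterior mean). -/
theorem tweedie_formula
    (n : ℕ) (μ : Measure (EuclideanSpace ℝ (Fin n))) [IsProbabilityMeasure μ]
    (hmom : Integrable (fun x : EuclideanSpace ℝ (Fin n) => ‖x‖) μ)
    (σ : ℝ) (hσ : 0 < σ)
    (p : EuclideanSpace ℝ (Fin n) → ℝ)
    (hp : ∀ y, p y = ∫ x, Real.exp (-‖y - x‖ ^ 2 / (2 * σ ^ 2)) ∂μ)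
    (m : EuclideanSpace ℝ (Fin n) → EuclideanSpace ℝ (Fin n))
    (hm : ∀ y, m y = ∫ x, Real.exp (-‖y - x‖ ^ 2 / (2 * σ ^ 2)) • x ∂μ) :
    ∀ y : EuclideanSpace ℝ (Fin n),
      0 < p y ∧
      HasGradientAt p ((σ ^ 2)⁻¹ • (m y - p y • y)) y ∧
      HasGradientAt (fun z => Real.log (p z)) ((σ ^ 2)⁻¹ • ((p y)⁻¹ • m y - y)) y :=
  tweedie_formula_general n μ σ hσ p hp m hm
end
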